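/- Fix p ∈ (0,1) and let I(x) = I_{p²}(x) if x < p², I(x) = 0 if p² ≤ x ≤ p(2-p), and I(x) = I_{p(2-p)}(x) if x > p(2-p). Every point y ∈ (0, p²) is an exposed point of I: there exists λ ∈ ℝ such that λy - I(y) > λx - I(x) for all x ≠ y. In fact λ = ln(y(1-p²)/((1-y)p²)) works. -/

import Mathlib

open Real

noncomputable def rateI (t : ℝ) (x : ℝ) : EReal :=
  if x ∈ Set.Icc (0 : ℝ) 1 then
    ((x * Real.log (x / t) + (1 - x) * Real.log ((1 - x) / (1 - t)) : ℝ) : EReal)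
  else ⊤

noncomputable def Ifun (p : ℝ) (x : ℝ) : EReal :=
  if x < p ^ 2 then rateI (p ^ 2) x
  else if x ≤ p * (2 - p) then 0
  else rateI (p * (2 - p)) x

/-!
Write `D(x‖t)` for the Bernoulli relative entropy, so that `I_t x = D(x‖t)` on `[0,1]`.
Shifting the reference point from `t` to `y` changes `D(x‖·)` by an affine function of `x`:
with `λ = log (y(1-t)/((1-y)t))`,
`λx - D(x‖t) = λy - D(y‖t) - D(x‖y)`,
and `D(x‖y) > 0` for `x ≠ y`. Taking `t = p²` settles `x < p²`. For `y < p²` the slope `λ`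
is negative, so on `x ≥ p²`, where `I ≥ 0`, the value `λx - I(x)` is at most its value
`λp² - D(p²‖p²)` at `x = p²`, already covered by the first case.
-/

namespace Real

noncomputable def klBernoulli (x t : ℝ) : ℝ :=
  x * log (x / t) + (1 - x) * log ((1 - x) / (1 - t))

theorem klBernoulli_self (t : ℝ) : klBernoulli t t = 0 := by
  simp [klBernoulli]

theorem mul_log_div_eq_add (a : ℝ) {b c : ℝ} (hb : b ≠ 0) (hc : c ≠ 0) :
    a * log (a / c) = a * log (a / b) + a * log (b / c) := by
  rcases eq_or_ne a 0 with rfl | ha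
  · simp
  · rw [log_div ha hc, log_div ha hb, log_div hb hc]
    ring

theorem klBernoulli_eq_add (x : ℝ) {y t : ℝ} (hy₀ : y ≠ 0) (hy₁ : 1 - y ≠ 0) (ht₀ : t ≠ 0)
    (ht₁ : 1 - t ≠ 0) :
    klBernoulli x t =
      klBernoulli x y + x * log (y / t) + (1 - x) * log ((1 - y) / (1 - t)) := by
  rw [klBernoulli, klBernoulli, mul_log_div_eq_add x hy₀ ht₀, mul_log_div_eq_add (1 - x) hy₁ ht₁]
  ring

theorem klBernoulli_tilt (x : ℝ) {y t : ℝ} (hy₀ : y ≠ 0) (hy₁ : 1 - y ≠ 0) (ht₀ : t ≠ 0)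
    (ht₁ : 1 - t ≠ 0) :
    log (y * (1 - t) / ((1 - y) * t)) * x - klBernoulli x t =
      log (y * (1 - t) / ((1 - y) * t)) * y - klBernoulli y t - klBernoulli x y := by
  have hslope : log (y * (1 - t) / ((1 - y) * t)) = log (y / t) - log ((1 - y) / (1 - t)) := by
    rw [← log_div (div_ne_zero hy₀ ht₀) (div_ne_zero hy₁ ht₁)]
    congr 1
    field_simp
  rw [klBernoulli_eq_add x hy₀ hy₁ ht₀ ht₁, klBernoulli_eq_add y hy₀ hy₁ ht₀ ht₁,
    klBernoulli_self, hslope]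
  ring

theorem sub_lt_mul_log_div {a b : ℝ} (ha : 0 ≤ a) (hb : 0 < b) (hab : a ≠ b) :
    a - b < a * log (a / b) := by
  have h := self_sub_one_lt_mul_log (div_nonneg ha hb.le)
    (by rwa [Ne, div_eq_one_iff_eq hb.ne'])
  have key := mul_lt_mul_of_pos_left h hb
  rwa [mul_sub, mul_div_cancel₀ _ hb.ne', ← mul_assoc, mul_div_cancel₀ _ hb.ne', mul_one] at key

theorem klBernoulli_pos {x y : ℝ} (hx : x ∈ Set.Icc (0 : ℝ) 1) (hy : y ∈ Set.Ioo (0 : ℝ) 1)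
    (hxy : x ≠ y) : 0 < klBernoulli x y := by
  have h₀ := sub_lt_mul_log_div hx.1 hy.1 hxy
  have h₁ := sub_lt_mul_log_div (sub_nonneg.2 hx.2) (sub_pos.2 hy.2)
    (fun h ↦ hxy (sub_right_injective h))
  rw [klBernoulli]
  linarith

theorem mul_sub_klBernoulli_lt {x y t : ℝ} (hx : x ∈ Set.Icc (0 : ℝ) 1)
    (hy : y ∈ Set.Ioo (0 : ℝ) 1) (ht : t ∈ Set.Ioo (0 : ℝ) 1) (hxy : x ≠ y) :
    log (y * (1 - t) / ((1 - y) * t)) * x - klBernoulli x t <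
      log (y * (1 - t) / ((1 - y) * t)) * y - klBernoulli y t := by
  have := klBernoulli_tilt x hy.1.ne' (by linarith [hy.2]) ht.1.ne' (by linarith [ht.2])
  linarith [klBernoulli_pos hx hy hxy]

theorem log_odds_ratio_neg {y t : ℝ} (hy : 0 < y) (hyt : y < t) (ht : t < 1) :
    log (y * (1 - t) / ((1 - y) * t)) < 0 := by
  have hden : 0 < (1 - y) * t := mul_pos (by linarith) (by linarith)
  refine log_neg (div_pos (mul_pos hy (by linarith)) hden) ?_
  rw [div_lt_one hden]
  nlinarith

end Real

theorem rateI_of_mem {t x : ℝ} (hx : x ∈ Set.Icc (0 : ℝ) 1) :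
    rateI t x = (klBernoulli x t : EReal) :=
  if_pos hx

theorem rateI_of_notMem {t x : ℝ} (hx : x ∉ Set.Icc (0 : ℝ) 1) : rateI t x = ⊤ :=
  if_neg hx

theorem Ifun_of_lt {p x : ℝ} (hx : x ∈ Set.Icc (0 : ℝ) 1) (hxt : x < p ^ 2) :
    Ifun p x = (klBernoulli x (p ^ 2) : EReal) := by
  rw [Ifun, if_pos hxt, rateI_of_mem hx]

theorem Ifun_of_mem_Icc {p x : ℝ} (hx : x ∈ Set.Icc (p ^ 2) (p * (2 - p))) : Ifun p x = 0 := by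
  rw [Ifun, if_neg hx.1.not_gt, if_pos hx.2]

theorem Ifun_of_gt {p x : ℝ} (hx : x ∈ Set.Icc (0 : ℝ) 1) (hxt : p ^ 2 ≤ x)
    (hxs : p * (2 - p) < x) : Ifun p x = (klBernoulli x (p * (2 - p)) : EReal) := by
  rw [Ifun, if_neg hxt.not_gt, if_neg hxs.not_ge, rateI_of_mem hx]

theorem Ifun_of_notMem {p x : ℝ} (hx : x ∉ Set.Icc (0 : ℝ) 1) : Ifun p x = ⊤ := by
  unfold Ifun
  split_ifs with h₁ h₂
  · exact rateI_of_notMem hx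
  · have hs : p * (2 - p) ≤ 1 := by nlinarith [sq_nonneg (p - 1)]
    exact absurd ⟨(sq_nonneg p).trans (not_lt.1 h₁), h₂.trans hs⟩ hx
  · exact rateI_of_notMem hx

theorem stmt_12 (p : ℝ) (hp : p ∈ Set.Ioo (0 : ℝ) 1) (y : ℝ)
    (hy : y ∈ Set.Ioo (0 : ℝ) (p ^ 2)) :
    ∀ x : ℝ, x ≠ y →
      ((((Real.log (y * (1 - p ^ 2) / ((1 - y) * p ^ 2))) * x : ℝ) : EReal) - Ifun p x <
        (((Real.log (y * (1 - p ^ 2) / ((1 - y) * p ^ 2))) * y : ℝ) : EReal) - Ifun p y) := by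
  obtain ⟨hp₀, hp₁⟩ := hp
  obtain ⟨hy₀, hyt⟩ := hy
  set t := p ^ 2
  have ht : t ∈ Set.Ioo (0 : ℝ) 1 := ⟨by positivity, by nlinarith⟩
  have hy₁ : y < 1 := hyt.trans ht.2
  set slope := log (y * (1 - t) / ((1 - y) * t))
  have hslope : slope < 0 := log_odds_ratio_neg hy₀ hyt ht.2
  have htilt : ∀ x ∈ Set.Icc (0 : ℝ) 1, x ≠ y →
      slope * x - klBernoulli x t < slope * y - klBernoulli y t :=
    fun x hx hxy ↦ mul_sub_klBernoulli_lt hx ⟨hy₀, hy₁⟩ ht hxy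
  have hpeak : slope * t < slope * y - klBernoulli y t := by
    simpa [klBernoulli_self] using htilt t ⟨ht.1.le, ht.2.le⟩ hyt.ne'
  intro x hxy
  rw [Ifun_of_lt ⟨hy₀.le, hy₁.le⟩ hyt, ← EReal.coe_sub]
  by_cases hx : x ∈ Set.Icc (0 : ℝ) 1
  · rcases lt_or_ge x t with hxt | hxt
    · rw [Ifun_of_lt hx hxt, ← EReal.coe_sub]
      exact_mod_cast htilt x hx hxy
    have hslope_x : slope * x ≤ slope * t := mul_le_mul_of_nonpos_left hxt hslope.le
    rcases le_or_gt x (p * (2 - p)) with hxs | hxs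
    · rw [Ifun_of_mem_Icc ⟨hxt, hxs⟩, sub_zero]
      exact_mod_cast hslope_x.trans_lt hpeak
    · have hs : p * (2 - p) ∈ Set.Ioo (0 : ℝ) 1 := ⟨by nlinarith, by nlinarith⟩
      rw [Ifun_of_gt hx hxt hxs, ← EReal.coe_sub]
      exact_mod_cast (by linarith [klBernoulli_pos hx hs hxs.ne'] :
        slope * x - klBernoulli x (p * (2 - p)) < slope * y - klBernoulli y t)
  · rw [Ifun_of_notMem hx, EReal.sub_top]
    exact EReal.bot_lt_coe _
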